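/- arXiv:2501.17060 — 2 statements merged into one kernel-verified Lean document; each statement's English description precedes it below -/
import Mathlib

section
/- Let (G, E) be a smooth digraph and let k ≥ 1. Then the k-linkedness relation, defined as the union over all n ≥ 1 of the relations F(k,n) induced by (k,n)-fences, is an equivalence relation on G. -/
def relComp {α : Type*} (R S : α → α → Prop) : α → α → Prop :=
  fun a c => ∃ b, R a b ∧ S b c

def relPow {α : Type*} (R : α → α → Prop) : ℕ → α → α → Prop
  | 0 => fun a b => a = b
  | n + 1 => relComp (relPow R n) R

/-- `fence E k n` is the relation induced by the `(k, n+1)`-`E`-fence. -/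
def fence {G : Type*} (E : G → G → Prop) (k : ℕ) : ℕ → G → G → Prop
  | 0 => fun a b => ∃ c, relPow E k a c ∧ relPow E k b c
  | n + 1 => relComp (fence E k n) (fence E k 0)

lemma fence_zero {G : Type*} (E : G → G → Prop) (k : ℕ) (a b : G) :
    fence E k 0 a b ↔ ∃ c, relPow E k a c ∧ relPow E k b c := by
  simp [fence]

lemma fence_succ {G : Type*} (E : G → G → Prop) (k n : ℕ) (a b : G) :
    fence E k (n + 1) a b ↔ ∃ d, fence E k n a d ∧ fence E k 0 d b := by
  simp [fence, relComp]

lemma relPow_exists {G : Type*} {E : G → G → Prop} (h : ∀ a, ∃ b, E a b) (k : ℕ) (a : G) :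
    ∃ c, relPow E k a c := by
  induction k with
  | zero => exact ⟨a, rfl⟩
  | succ n ih =>
    obtain ⟨c, hc⟩ := ih
    obtain ⟨d, hd⟩ := h c
    exact ⟨d, c, hc, hd⟩

lemma fence_trans {G : Type*} {E : G → G → Prop} {k m : ℕ} {a b c : G} :
    ∀ n, fence E k m a b → fence E k n b c → fence E k (m + n + 1) a c := by
  intro n
  induction n generalizing c with
  | zero => intro h1 h2; exact (fence_succ E k m a c).mpr ⟨b, h1, h2⟩
  | succ n ih =>
    intro h1 h2
    obtain ⟨d, hd1, hd2⟩ := (fence_succ E k n b c).mp h2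
    exact (fence_succ E k (m + n + 1) a c).mpr ⟨d, ih h1 hd1, hd2⟩

lemma fence_symm {G : Type*} {E : G → G → Prop} {k : ℕ} :
    ∀ n, ∀ {a b : G}, fence E k n a b → fence E k n b a := by
  intro n
  induction n with
  | zero =>
    intro a b h
    obtain ⟨c, h1, h2⟩ := (fence_zero E k a b).mp h
    exact (fence_zero E k b a).mpr ⟨c, h2, h1⟩
  | succ n ih =>
    intro a b h
    obtain ⟨d, h1, h2⟩ := (fence_succ E k n a b).mp h
    obtain ⟨e, he1, he2⟩ := (fence_zero E k d b).mp h2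
    have h2' : fence E k 0 b d := (fence_zero E k b d).mpr ⟨e, he2, he1⟩
    have := fence_trans (m := 0) n h2' (ih h1)
    simpa using this

theorem linkedness_equivalence {G : Type*} (E : G → G → Prop)
    (hsmooth : (∀ a, ∃ b, E a b) ∧ (∀ a, ∃ b, E b a)) (k : ℕ) (hk : 1 ≤ k) :
    Equivalence (fun a b : G => ∃ n : ℕ, fence E k n a b) := by
  constructor
  · intro a
    obtain ⟨c, hc⟩ := relPow_exists hsmooth.1 k a
    exact ⟨0, (fence_zero E k a a).mpr ⟨c, hc, hc⟩⟩
  · rintro a b ⟨n, h⟩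
    exact ⟨n, fence_symm n h⟩
  · rintro a b c ⟨m, h1⟩ ⟨n, h2⟩
    exact ⟨m + n + 1, fence_trans n h1 h2⟩
end

section
/- Let Ω be an oligomorphic permutation group on a set G, let η be an Ω-invariant equivalence relation on G, and let H be a class of η. Define Ω|_H = {f|_H : f ∈ Ω, f(H) = H}, a group of permutations of H. Then for every k ≥ 1, the orbits of Ω|_H on H^k are exactly the nonempty sets of the form O ∩ H^k where O is an orbit of Ω on G^k; consequently Ω|_H is oligomorphic. -/
/-!
A class `H` of an `Ω`-invariant equivalence is a block of `Ω`: a permutation in `Ω` that moves one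
point of `H` into `H` stabilizes `H`. So for a tuple `x` in `H^k` with `k ≥ 1`, a permutation
`f ∈ Ω` with `f ∘ x ∈ H^k` already stabilizes `H`, i.e. the orbit of `x` under the stabilizer
of `H` is its `Ω`-orbit cut down to `H^k`; every nonempty `O ∩ H^k` is of this form, with `x` any
of its points. Finitely many orbits `O` then leave finitely many restricted orbits.
-/

/-- A permutation group is oligomorphic if for each `m` it has only finitely many
orbits on `m`-tuples. -/
def IsOligomorphic {G : Type*} (Ω : Subgroup (Equiv.Perm G)) : Prop :=
  ∀ m : ℕ, {O : Set (Fin m → G) | ∃ x : Fin m → G, O = {y | ∃ f ∈ Ω, y = ⇑f ∘ x}}.Finite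

section

open Set MulAction Pointwise

variable {G : Type*} {Ω : Subgroup (Equiv.Perm G)}

theorem MulAction.IsBlock.image_eq_of_apply_mem {H : Set G} (hH : IsBlock Ω H)
    {f : Equiv.Perm G} (hf : f ∈ Ω) {a : G} (ha : a ∈ H) (hfa : f a ∈ H) : ⇑f '' H = H :=
  hH.smul_eq_of_mem (g := ⟨f, hf⟩) ha hfa

theorem Equivalence.isBlock_setOf {η : G → G → Prop} (hη : Equivalence η)
    (hinv : ∀ f ∈ Ω, ∀ a b : G, η a b → η (f a) (f b)) (c : G) : IsBlock Ω {b | η c b} := by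
  have smul_iff (g : Ω) (x y : G) : η (g • x) (g • y) ↔ η x y :=
    ⟨fun h => by simpa [Subgroup.smul_def] using hinv _ (g⁻¹).2 _ _ h, hinv _ g.2 x y⟩
  have left_iff {a : G} (ha : η c a) (x : G) : η c x ↔ η a x :=
    ⟨hη.trans (hη.symm ha), hη.trans ha⟩
  refine isBlock_iff_smul_eq_of_mem.mpr fun g a ha hga => ?_
  ext b
  calc b ∈ g • {b | η c b} ↔ η c (g⁻¹ • b) := mem_smul_set_iff_inv_smul_mem
    _ ↔ η (g • a) b := by rw [left_iff ha, ← smul_iff g, smul_inv_smul]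
    _ ↔ η c b := (left_iff hga b).symm

variable {ι : Type*}

variable (Ω) in
def tupleOrbit (x : ι → G) : Set (ι → G) := {y | ∃ f ∈ Ω, y = ⇑f ∘ x}

variable (Ω) in
def stabTupleOrbit (H : Set G) (x : ι → G) : Set (ι → G) :=
  {y | ∃ f ∈ Ω, ⇑f '' H = H ∧ y = ⇑f ∘ x}

theorem tupleOrbit_comp {f : Equiv.Perm G} (hf : f ∈ Ω) (x : ι → G) :
    tupleOrbit Ω (⇑f ∘ x) = tupleOrbit Ω x := by
  ext y
  constructor
  · rintro ⟨g, hg, rfl⟩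
    exact ⟨g * f, mul_mem hg hf, rfl⟩
  · rintro ⟨g, hg, rfl⟩
    refine ⟨g * f⁻¹, mul_mem hg (inv_mem hf), ?_⟩
    ext i
    simp

theorem MulAction.IsBlock.stabTupleOrbit_eq [Nonempty ι] {H : Set G} (hH : IsBlock Ω H)
    {x : ι → G} (hx : ∀ i, x i ∈ H) :
    stabTupleOrbit Ω H x = tupleOrbit Ω x ∩ {y | ∀ i, y i ∈ H} := by
  ext y
  constructor
  · rintro ⟨f, hf, hfH, rfl⟩
    exact ⟨⟨f, hf, rfl⟩, fun i => hfH ▸ mem_image_of_mem f (hx i)⟩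
  · rintro ⟨⟨f, hf, rfl⟩, hy⟩
    obtain ⟨i⟩ := ‹Nonempty ι›
    exact ⟨f, hf, hH.image_eq_of_apply_mem hf (hx i) (hy i), rfl⟩

theorem MulAction.IsBlock.setOf_stabTupleOrbit_eq [Nonempty ι] {H : Set G} (hH : IsBlock Ω H) :
    {S | ∃ x : ι → G, (∀ i, x i ∈ H) ∧ S = stabTupleOrbit Ω H x} =
      {S | S.Nonempty ∧ ∃ x, S = tupleOrbit Ω x ∩ {y | ∀ i, y i ∈ H}} := by
  ext S
  constructor
  · rintro ⟨x, hx, rfl⟩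
    rw [hH.stabTupleOrbit_eq hx]
    exact ⟨⟨x, ⟨1, one_mem _, rfl⟩, hx⟩, x, rfl⟩
  · rintro ⟨hne, x, rfl⟩
    obtain ⟨_, ⟨f, hf, rfl⟩, hy⟩ := hne
    exact ⟨f ∘ x, hy, by rw [hH.stabTupleOrbit_eq hy, tupleOrbit_comp hf]⟩

theorem Set.Finite.setOf_tupleOrbit_inter (h : {O | ∃ x : ι → G, O = tupleOrbit Ω x}.Finite)
    (T : Set (ι → G)) : {S | ∃ x, S = tupleOrbit Ω x ∩ T}.Finite :=
  (h.image (· ∩ T)).subset fun _ ⟨x, hS⟩ => ⟨_, ⟨x, rfl⟩, hS.symm⟩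

end

theorem restriction_orbits {G : Type*} (Ω : Subgroup (Equiv.Perm G))
    (holig : IsOligomorphic Ω) (η : G → G → Prop) (hEq : Equivalence η)
    (hinv : ∀ f ∈ Ω, ∀ a b : G, η a b → η (f a) (f b))
    (H : Set G) (hclass : ∃ a : G, H = {b | η a b}) :
    ∀ k : ℕ, 1 ≤ k →
      ({S : Set (Fin k → G) | ∃ x : Fin k → G, (∀ i, x i ∈ H) ∧
          S = {y | ∃ f ∈ Ω, ⇑f '' H = H ∧ y = ⇑f ∘ x}}
        = {S : Set (Fin k → G) | S.Nonempty ∧ ∃ x : Fin k → G,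
            S = {y | ∃ f ∈ Ω, y = ⇑f ∘ x} ∩ {y | ∀ i, y i ∈ H}})
      ∧ {S : Set (Fin k → G) | ∃ x : Fin k → G, (∀ i, x i ∈ H) ∧
          S = {y | ∃ f ∈ Ω, ⇑f '' H = H ∧ y = ⇑f ∘ x}}.Finite := by
  intro k hk
  obtain ⟨c, rfl⟩ := hclass
  have : Nonempty (Fin k) := ⟨⟨0, hk⟩⟩
  have horbits := (hEq.isBlock_setOf hinv c).setOf_stabTupleOrbit_eq (ι := Fin k)
  refine ⟨horbits, (congrArg Set.Finite horbits).mpr ?_⟩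
  exact ((holig k).setOf_tupleOrbit_inter _).subset fun _ => And.right
end
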